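/- Let a, b be odd integers with a ≥ 3, b ≥ 1, T the generalized Collatz map, and Ω a cycle of T with odd elements Ω₁ of cardinality K and even elements of cardinality L. Then 2^(K+L)/a^K = ∏_{n ∈ Ω₁} (1 + b/(an)). -/

import Mathlib

/-!
Since `T` maps the finite set `Ω` onto itself, it permutes `Ω`, so `∏_{Ω} T n = ∏_{Ω} n`.
As `2 T n` is `n` for even `n` and `a n + b` for odd `n`, this reads
`∏_{Ω₁} (a n + b) · ∏_{even} n = 2^(K+L) ∏_{Ω₁} n · ∏_{even} n`; cancelling the (nonzero)
product over the even elements and dividing by `a^K ∏_{Ω₁} n` gives the identity.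
-/

open Finset

theorem Finset.prod_comp_eq_prod_of_image_eq {α M : Type*} [DecidableEq α] [CommMonoid M]
    {s : Finset α} {f : α → α} (hs : s.image f = s) (g : α → M) :
    ∏ x ∈ s, g (f x) = ∏ x ∈ s, g x := by
  conv_rhs => rw [← hs]
  exact (prod_image (card_image_iff.mp (by rw [hs]))).symm

theorem two_mul_collatz_step {a b : ℤ} (ha : Odd a) (hb : Odd b) {T : ℤ → ℤ}
    (hT : ∀ n, T n = if n % 2 = 0 then n / 2 else (a * n + b) / 2) (n : ℤ) :
    2 * T n = if Odd n then a * n + b else n := by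
  rw [hT]
  split_ifs with heven hodd hodd
  · exact absurd hodd (Int.not_odd_iff.mpr heven)
  · exact Int.mul_ediv_cancel' (Int.dvd_of_emod_eq_zero heven)
  · exact Int.mul_ediv_cancel' ((ha.mul hodd).add_odd hb).two_dvd
  · exact absurd (Int.odd_iff.mpr (by omega)) hodd

theorem prod_odd_affine_eq_two_pow_card_mul_prod_odd {a b : ℤ} (ha : Odd a) (hb : Odd b)
    {T : ℤ → ℤ} (hT : ∀ n, T n = if n % 2 = 0 then n / 2 else (a * n + b) / 2)
    {Ω : Finset ℤ} (hne : ∀ x ∈ Ω, x ≠ 0) (hcycle : Ω.image T = Ω) :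
    ∏ x ∈ Ω.filter Odd, (a * x + b) = 2 ^ #Ω * ∏ x ∈ Ω.filter Odd, x := by
  have hsteps : 2 ^ #Ω * ∏ x ∈ Ω, x = ∏ x ∈ Ω, if Odd x then a * x + b else x := by
    rw [← prod_comp_eq_prod_of_image_eq hcycle (fun x => x), ← prod_const, ← prod_mul_distrib]
    exact prod_congr rfl fun x _ => two_mul_collatz_step ha hb hT x
  rw [prod_ite, ← prod_filter_mul_prod_filter_not Ω Odd, ← mul_assoc] at hsteps
  have heven_ne : ∏ x ∈ Ω.filter (¬Odd ·), x ≠ 0 :=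
    prod_ne_zero_iff.mpr fun x hx => hne x (mem_of_mem_filter x hx)
  exact (mul_right_cancel₀ heven_ne hsteps).symm

theorem cycle_product_identity_general
    (a b : ℤ) (ha : Odd a) (hb : Odd b)
    (T : ℤ → ℤ) (hT : ∀ n, T n = if n % 2 = 0 then n / 2 else (a * n + b) / 2)
    (Ω : Finset ℤ) (hpos : ∀ x ∈ Ω, 0 < x) (hcycle : Ω.image T = Ω)
    (Ω₁ : Finset ℤ) (hΩ₁ : Ω₁ = Ω.filter (fun x => Odd x))
    (K L : ℕ) (hK : K = Ω₁.card) (hL : L = Ω.card - K) :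
    (2 : ℝ) ^ (K + L) / (a : ℝ) ^ K = ∏ n ∈ Ω₁, (1 + (b : ℝ) / (a * n)) := by
  have hKL : K + L = #Ω := by
    have : K ≤ #Ω := hK ▸ hΩ₁ ▸ card_filter_le Ω Odd
    omega
  have hkey : ∏ x ∈ Ω₁, ((a : ℝ) * x + b) = 2 ^ (K + L) * ∏ x ∈ Ω₁, (x : ℝ) := by
    have := congrArg (Int.cast : ℤ → ℝ) <| prod_odd_affine_eq_two_pow_card_mul_prod_odd ha hb hT
      (fun x hx => (hpos x hx).ne') hcycle
    push_cast at this
    rwa [hKL, hΩ₁]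
  have hodd_ne : ∀ x : ℤ, Odd x → (x : ℝ) ≠ 0 := fun x hx =>
    Int.cast_ne_zero.mpr (by rintro rfl; exact Int.not_odd_zero hx)
  have hΩ₁_odd : ∀ x ∈ Ω₁, Odd x := fun x hx => (mem_filter.mp (hΩ₁ ▸ hx)).2
  calc (2 : ℝ) ^ (K + L) / (a : ℝ) ^ K
      = (∏ x ∈ Ω₁, ((a : ℝ) * x + b)) / ∏ x ∈ Ω₁, ((a : ℝ) * x) := by
        rw [hkey, prod_mul_distrib, prod_const, ← hK,
          mul_div_mul_right _ _ (prod_ne_zero_iff.mpr fun x hx => hodd_ne x (hΩ₁_odd x hx))]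
    _ = ∏ n ∈ Ω₁, (1 + (b : ℝ) / (a * n)) := by
        rw [← prod_div_distrib]
        refine prod_congr rfl fun x hx => ?_
        field_simp [hodd_ne a ha, hodd_ne x (hΩ₁_odd x hx)]

/-- For a cycle `Ω` of `T` with odd elements `Ω₁` (cardinality `K`) and
`L` even elements, `2^(K+L)/a^K = ∏_{n ∈ Ω₁} (1 + b/(a n))`. -/
theorem cycle_product_identity
    (a b : ℤ) (ha : Odd a) (hb : Odd b) (ha3 : 3 ≤ a) (hb1 : 1 ≤ b)
    (T : ℤ → ℤ) (hT : ∀ n, T n = if n % 2 = 0 then n / 2 else (a * n + b) / 2)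
    (Ω : Finset ℤ) (hpos : ∀ x ∈ Ω, 0 < x) (hcycle : Ω.image T = Ω)
    (Ω₁ : Finset ℤ) (hΩ₁ : Ω₁ = Ω.filter (fun x => Odd x))
    (K L : ℕ) (hK : K = Ω₁.card) (hL : L = Ω.card - K) :
    (2 : ℝ) ^ (K + L) / (a : ℝ) ^ K = ∏ n ∈ Ω₁, (1 + (b : ℝ) / (a * n)) :=
  cycle_product_identity_general a b ha hb T hT Ω hpos hcycle Ω₁ hΩ₁ K L hK hL
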